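/- Let n, k ≥ 1 and f : 𝔽_{2^n} → ℤ/2^kℤ. Then f is nega-ℤ_{2^k}-bent (i.e., |K_f(c,u)| = 2^{n/2} for all u ∈ 𝔽_{2^n} and all nonzero c ∈ ℤ/2^kℤ) if and only if for every nonzero z ∈ 𝔽_{2^n} the function y ↦ f(y+z) − f(y) + 2^{k−1}·ι(Tr(zy)) from 𝔽_{2^n} to ℤ/2^kℤ is balanced. -/

import Mathlib

noncomputable section

/-- The absolute trace Tr(x) = x + x² + x⁴ + … + x^{2^{n−1}}. -/
def Tr {F : Type} [Field F] (n : ℕ) (x : F) : F :=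
  ∑ i ∈ Finset.range n, x ^ (2 ^ i)

/-- σ(c,x) = Σ_{0 ≤ i < j ≤ n−1} (cx)^{2^i} (cx)^{2^j} -/
def sig {F : Type} [Field F] (n : ℕ) (c x : F) : F :=
  ∑ j ∈ Finset.range n, ∑ i ∈ Finset.range j, (c * x) ^ (2 ^ i) * (c * x) ^ (2 ^ j)

/-- ι(e): the integer lift of e ∈ {0,1} ⊆ F. -/
def iotaN {F : Type} [Field F] [DecidableEq F] (e : F) : ℕ :=
  if e = 1 then 1 else 0

/-- ι(e) viewed in ℤ/2^kℤ. -/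
def iotaZ {F : Type} [Field F] [DecidableEq F] (k : ℕ) (e : F) : ZMod (2 ^ k) :=
  if e = 1 then 1 else 0

/-- ζ = e^{2πi/2^k}. -/
def zeta (k : ℕ) : ℂ := Complex.exp (2 * Real.pi * Complex.I / 2 ^ k)

/-- c₀ ∈ {0,1} ⊆ F equals 1 if c is odd and 0 if c is even. -/
def czero {F : Type} [Field F] (k : ℕ) (c : ZMod (2 ^ k)) : F :=
  if c.val % 2 = 1 then 1 else 0

/-- The nega-ℤ_{2^k}-Hadamard transform
K_f(c,u) = Σ_{x ∈ F} (−1)^{ι(Tr(ux)) + ι(σ(c₀,x))} ζ^{c·f(x)} i^{ι(Tr(c₀x))}. -/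
def negaK {F : Type} [Field F] [Fintype F] [DecidableEq F] (n k : ℕ)
    (f : F → ZMod (2 ^ k)) (c : ZMod (2 ^ k)) (u : F) : ℂ :=
  ∑ x : F, (-1 : ℂ) ^ (iotaN (Tr n (u * x)) + iotaN (sig n (czero k c) x)) *
    zeta k ^ (c * f x).val * Complex.I ^ (iotaN (Tr n (czero k c * x)))

/-- g : F → ℤ/2^kℤ is balanced if every value is attained exactly 2^n/2^k times. -/
def IsBalancedFn {F : Type} [Fintype F] [DecidableEq F] (n k : ℕ)
    (g : F → ZMod (2 ^ k)) : Prop :=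
  ∀ w : ZMod (2 ^ k),
    2 ^ k * (Finset.univ.filter fun y : F => g y = w).card = 2 ^ n

/-!
Write `K_f(c, ·)` as the Fourier transform, for the character `x ↦ (-1)^Tr(x)`, of the unimodular
function `h_c(x) = (-1)^σ(c₀,x) i^Tr(c₀x) ζ^(c f(x))`. A unimodular function has a flat spectrum
iff its autocorrelation vanishes away from `0`. Expanding `σ(c₀, x + z)` in characteristic `2`
shows that the autocorrelation of `h_c` at `z` is a unit times `∑ₓ ζ^(c D_z(x))`, where
`D_z(x) = f(x + z) - f(x) + 2^(k-1) Tr(zx)`, and `D_z` is balanced iff these character sums vanish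
for every `c ≠ 0`.
-/

open Finset ComplexConjugate

section Autocorrelation
variable {R : Type*} [CommRing R] [Fintype R]

def charTransform (ψ : AddChar R ℂ) (h : R → ℂ) (u : R) : ℂ :=
  ∑ x, ψ (u * x) * h x

def autocorrelation (h : R → ℂ) (z : R) : ℂ :=
  ∑ x, h (x + z) * conj (h x)

theorem charTransform_mul_conj (ψ : AddChar R ℂ) (h : R → ℂ) (u : R) :
    charTransform ψ h u * conj (charTransform ψ h u) =
      ∑ z, ψ (u * z) * autocorrelation h z := by
  simp only [charTransform, map_sum, map_mul, ← AddChar.map_neg_eq_conj, sum_mul_sum]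
  simp only [autocorrelation, mul_sum]
  rw [sum_comm]
  conv_rhs => rw [sum_comm]
  refine sum_congr rfl fun y _ => (Fintype.sum_equiv (Equiv.addLeft y) _ _ fun z => ?_).symm
  have hψ : ψ (u * (y + z)) * ψ (-(u * y)) = ψ (u * z) := by
    rw [← AddChar.map_add_eq_mul]; ring_nf
  rw [Equiv.coe_addLeft, ← hψ]
  ring

theorem forall_norm_charTransform_sq_iff [DecidableEq R] {ψ : AddChar R ℂ}
    (hψ : ψ.IsPrimitive) {h : R → ℂ} (hh : ∀ x, ‖h x‖ = 1) :
    (∀ u, ‖charTransform ψ h u‖ ^ 2 = Fintype.card R) ↔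
      ∀ z ≠ 0, autocorrelation h z = 0 := by
  have hA0 : autocorrelation h 0 = Fintype.card R := by
    simp [autocorrelation, Complex.mul_conj', hh]
  have hW : ∀ u, ((‖charTransform ψ h u‖ ^ 2 : ℝ) : ℂ) = ∑ z, ψ (u * z) * autocorrelation h z := by
    intro u
    rw [← charTransform_mul_conj, Complex.mul_conj', Complex.ofReal_pow]
  constructor
  · intro hbent z hz
    have hsum : ∑ u, ψ (-(u * z)) * ((‖charTransform ψ h u‖ ^ 2 : ℝ) : ℂ) =
        Fintype.card R * autocorrelation h z := by
      simp only [hW, mul_sum, ← mul_assoc, ← AddChar.map_add_eq_mul]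
      rw [sum_comm]
      simp only [← sum_mul, neg_add_eq_sub, ← mul_sub, AddChar.sum_mulShift _ hψ, sub_eq_zero]
      simp
    have hzero : ∑ u, ψ (-(u * z)) * ((‖charTransform ψ h u‖ ^ 2 : ℝ) : ℂ) = 0 := by
      simp only [hbent, Complex.ofReal_natCast, ← sum_mul, ← mul_neg,
        AddChar.sum_mulShift _ hψ, neg_eq_zero, if_neg hz, Nat.cast_zero, zero_mul]
    rw [hzero] at hsum
    exact (mul_eq_zero.mp hsum.symm).resolve_left (Nat.cast_ne_zero.mpr Fintype.card_ne_zero)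
  · intro hA u
    have := hW u
    rw [sum_eq_single 0 (fun z _ hz => by rw [hA z hz, mul_zero]) (by simp), mul_zero,
      AddChar.map_zero_eq_one, one_mul, hA0] at this
    exact_mod_cast this

end Autocorrelation

section RootsOfUnity

theorem sum_stdAddChar_mul_eq_zero_iff {α : Type*} [Fintype α] {N : ℕ} [NeZero N]
    (g : α → ZMod N) :
    (∀ c ≠ 0, ∑ x, ZMod.stdAddChar (c * g x) = 0) ↔
      ∀ w, N * #{x | g x = w} = Fintype.card α := by
  have hψ := ZMod.isPrimitive_stdAddChar N
  have fiber : ∀ w, ((N * #{x | g x = w} : ℕ) : ℂ) =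
      ∑ c, ZMod.stdAddChar (-(c * w)) * ∑ x, ZMod.stdAddChar (c * g x) := by
    intro w
    have hc : ∀ c x, ZMod.stdAddChar (-(c * w)) * ZMod.stdAddChar (c * g x) =
        ZMod.stdAddChar (c * (g x - w)) := fun c x => by
      rw [← AddChar.map_add_eq_mul]; ring_nf
    simp_rw [mul_sum, hc]
    rw [sum_comm]
    simp_rw [AddChar.sum_mulShift _ hψ, sub_eq_zero]
    rw [← Nat.cast_sum, sum_ite, sum_const_zero, add_zero, sum_const, smul_eq_mul, ZMod.card,
      mul_comm]
  constructor
  · intro h w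
    have := fiber w
    rw [sum_eq_single 0 (fun c _ hc => by rw [h c hc, mul_zero]) (by simp)] at this
    simp only [zero_mul, neg_zero, AddChar.map_zero_eq_one, one_mul, sum_const, card_univ,
      nsmul_eq_mul, mul_one] at this
    exact_mod_cast this
  · intro h c hc
    have hsum : (N : ℂ) * ∑ x, ZMod.stdAddChar (c * g x) =
        Fintype.card α * ∑ w, ZMod.stdAddChar (w * c) := by
      rw [← sum_fiberwise univ g, mul_sum, mul_sum]
      refine sum_congr rfl fun w _ => ?_
      rw [sum_congr rfl fun x hx => by rw [(mem_filter.mp hx).2], sum_const, nsmul_eq_mul,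
        ← mul_assoc, mul_comm c, ← h w]
      push_cast; ring
    rw [AddChar.sum_mulShift _ hψ, if_neg hc, Nat.cast_zero, mul_zero] at hsum
    exact (mul_eq_zero.mp hsum).resolve_left (NeZero.ne _ |> Nat.cast_ne_zero.mpr)

theorem zeta_pow_val (k : ℕ) (m : ZMod (2 ^ k)) : zeta k ^ m.val = ZMod.stdAddChar m := by
  rw [ZMod.stdAddChar_apply, ZMod.toCircle_apply, zeta, ← Complex.exp_nat_mul]
  push_cast
  ring_nf

theorem stdAddChar_mul_two_pow_pred {k : ℕ} (hk : 1 ≤ k) (c : ZMod (2 ^ k)) :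
    ZMod.stdAddChar (c * 2 ^ (k - 1)) = (-1) ^ c.val := by
  have hcast : c * 2 ^ (k - 1) = ((c.val * 2 ^ (k - 1) : ℕ) : ZMod (2 ^ k)) := by
    push_cast; rw [ZMod.natCast_zmod_val]
  have hpow : (2 : ℂ) ^ k = 2 ^ (k - 1) * 2 := by rw [← pow_succ, Nat.sub_add_cancel hk]
  rw [hcast, ZMod.stdAddChar_apply, ZMod.toCircle_natCast, ← Complex.exp_pi_mul_I,
    ← Complex.exp_nat_mul]
  push_cast
  rw [hpow]
  field_simp

end RootsOfUnity

section RangePairs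
variable {R : Type*} [CommRing R]

theorem sum_range_sum_range_mul_add_mul (a b : ℕ → R) (m : ℕ) :
    ∑ j ∈ range m, ∑ i ∈ range j, (a i * b j + a j * b i) + ∑ i ∈ range m, a i * b i =
      (∑ i ∈ range m, a i) * ∑ i ∈ range m, b i := by
  induction m with
  | zero => simp
  | succ m ih =>
    simp only [sum_range_succ, sum_add_distrib, ← sum_mul, ← mul_sum] at ih ⊢
    linear_combination ih

theorem sum_range_succ_sum_range_mul (a : ℕ → R) (m : ℕ) :
    ∑ j ∈ range (m + 1), ∑ i ∈ range j, a i * a j =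
      ∑ j ∈ range m, ∑ i ∈ range j, a (i + 1) * a (j + 1) + a 0 * ∑ j ∈ range m, a (j + 1) := by
  simp [sum_range_succ', sum_add_distrib, mul_sum, mul_comm]

end RangePairs

theorem Tr_zero {F : Type} [Field F] {n : ℕ} : Tr n (0 : F) = 0 := by
  simp [Tr]

section CharTwo
variable {F : Type} [Field F] [CharP F 2] {n : ℕ}

theorem Tr_add (x y : F) : Tr n (x + y) = Tr n x + Tr n y := by
  simp only [Tr, ← sum_add_distrib, add_pow_char_pow]

theorem sig_add (c x z : F) :
    sig n c (x + z) = sig n c x + sig n c z + Tr n (c * x) * Tr n (c * z) +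
      Tr n (c * c * (x * z)) := by
  set a : ℕ → F := fun i => (c * x) ^ 2 ^ i
  set b : ℕ → F := fun i => (c * z) ^ 2 ^ i
  have hsig : sig n c (x + z) = sig n c x + sig n c z +
      ∑ j ∈ range n, ∑ i ∈ range j, (a i * b j + a j * b i) := by
    simp only [sig, ← sum_add_distrib]
    refine sum_congr rfl fun j _ => sum_congr rfl fun i _ => ?_
    simp only [a, b, mul_add, add_pow_char_pow]
    ring
  have hdiag : Tr n (c * c * (x * z)) = ∑ i ∈ range n, a i * b i := by
    simp only [Tr, a, b, ← mul_pow]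
    ring_nf
  have hTx : Tr n (c * x) = ∑ i ∈ range n, a i := rfl
  have hTz : Tr n (c * z) = ∑ i ∈ range n, b i := rfl
  rw [hsig, hdiag, hTx, hTz]
  linear_combination sum_range_sum_range_mul_add_mul a b n -
    CharTwo.add_self_eq_zero (∑ i ∈ range n, a i * b i)

end CharTwo

section FiniteField
variable {F : Type} [Field F] [Fintype F] {n : ℕ}

theorem Tr_eq_algebraMap_trace [Algebra (ZMod 2) F] (hF : Fintype.card F = 2 ^ n) (x : F) :
    Tr n x = algebraMap (ZMod 2) F (Algebra.trace (ZMod 2) F x) := by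
  have hrank : Module.finrank (ZMod 2) F = n := by
    have := Module.card_eq_pow_finrank (K := ZMod 2) (V := F)
    rw [hF, ZMod.card] at this
    exact (Nat.pow_right_injective le_rfl this).symm
  rw [FiniteField.algebraMap_trace_eq_sum_pow, hrank, Nat.card_zmod, Tr]

variable [CharP F 2]

theorem Tr_eq_zero_or_one (hF : Fintype.card F = 2 ^ n) (x : F) : Tr n x = 0 ∨ Tr n x = 1 := by
  let := ZMod.algebra F 2
  rw [Tr_eq_algebraMap_trace hF]
  obtain h | h : Algebra.trace (ZMod 2) F x = 0 ∨ Algebra.trace (ZMod 2) F x = 1 := by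
    generalize Algebra.trace (ZMod 2) F x = t; decide +revert
  all_goals simp [h]

theorem exists_Tr_eq_one (hF : Fintype.card F = 2 ^ n) : ∃ x : F, Tr n x = 1 := by
  let := ZMod.algebra F 2
  obtain ⟨x, hx⟩ := Algebra.trace_surjective (ZMod 2) F 1
  exact ⟨x, by rw [Tr_eq_algebraMap_trace hF, hx, map_one]⟩

theorem sig_eq_zero_or_one (hF : Fintype.card F = 2 ^ n) (c x : F) :
    sig n c x = 0 ∨ sig n c x = 1 := by
  rw [← IsIdempotentElem.iff_eq_zero_or_one, IsIdempotentElem]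
  set a : ℕ → F := fun i => (c * x) ^ 2 ^ i
  have hsig : sig n c x = ∑ j ∈ range n, ∑ i ∈ range j, a i * a j := rfl
  have hfrob : ∀ i, a i ^ 2 = a (i + 1) := fun i => by
    simp only [a, ← pow_mul, ← pow_succ]
  have hperiod : a n = a 0 := by
    simp only [a, pow_zero, pow_one, ← hF, FiniteField.pow_card]
  have hsq : sig n c x ^ 2 = ∑ j ∈ range n, ∑ i ∈ range j, a (i + 1) * a (j + 1) := by
    simp only [hsig, sum_pow_char, mul_pow, hfrob]
  have hshift := (sum_range_succ' a n).symm.trans (sum_range_succ a n)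
  have hpairs := sum_range_succ_sum_range_mul a n
  rw [sum_range_succ, ← sum_mul, ← hsig, ← hsq, hperiod] at hpairs
  rw [hperiod] at hshift
  linear_combination -hpairs - a 0 * hshift

end FiniteField

section SignIdentity
variable {F : Type} [Field F] [CharP F 2] [DecidableEq F]

theorem neg_one_pow_iotaN_add {e e' : F} (he : e = 0 ∨ e = 1) (he' : e' = 0 ∨ e' = 1) :
    (-1 : ℂ) ^ iotaN (e + e') = (-1) ^ iotaN e * (-1) ^ iotaN e' := by
  rcases he with rfl | rfl <;> rcases he' with rfl | rfl <;>
    simp [iotaN, CharTwo.add_self_eq_zero]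

-- `a + b` is `a xor b`, so `i^(a + b) = i^a i^b (-1)^(ab)`: the carry `ab` absorbs the cross
-- term `Tr(c₀x) Tr(c₀z)` of `σ(c₀, x + z)`.
theorem nega_sign_identity {s s' a b t : F} (hs : s = 0 ∨ s = 1) (hs' : s' = 0 ∨ s' = 1)
    (ha : a = 0 ∨ a = 1) (hb : b = 0 ∨ b = 1) (ht : t = 0 ∨ t = 1) :
    (-1 : ℂ) ^ iotaN (s + s' + a * b + t) * Complex.I ^ iotaN (a + b) *
        conj ((-1 : ℂ) ^ iotaN s * Complex.I ^ iotaN a) =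
      (-1) ^ iotaN s' * Complex.I ^ iotaN b * (-1) ^ iotaN t := by
  rcases hs with rfl | rfl <;> rcases hs' with rfl | rfl <;> rcases ha with rfl | rfl <;>
    rcases hb with rfl | rfl <;> rcases ht with rfl | rfl <;>
    simp [iotaN, CharTwo.add_self_eq_zero, Complex.conj_I]

end SignIdentity

section Nega
variable {F : Type} [Field F] {n : ℕ}

theorem czero_eq_zero_or_one (k : ℕ) (c : ZMod (2 ^ k)) :
    czero (F := F) k c = 0 ∨ czero (F := F) k c = 1 := by
  unfold czero; split_ifs <;> simp

variable [DecidableEq F]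

def negaPhase (n : ℕ) (c₀ x : F) : ℂ :=
  (-1) ^ iotaN (sig n c₀ x) * Complex.I ^ iotaN (Tr n (c₀ * x))

theorem norm_negaPhase (c₀ x : F) : ‖negaPhase n c₀ x‖ = 1 := by
  simp [negaPhase]

theorem negaPhase_ne_zero (c₀ x : F) : negaPhase n c₀ x ≠ 0 :=
  norm_ne_zero_iff.mp (by rw [norm_negaPhase]; exact one_ne_zero)

def negaSummand (n k : ℕ) (f : F → ZMod (2 ^ k)) (c : ZMod (2 ^ k)) (x : F) : ℂ :=
  negaPhase n (czero k c) x * ZMod.stdAddChar (c * f x)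

theorem norm_negaSummand (k : ℕ) (f : F → ZMod (2 ^ k)) (c : ZMod (2 ^ k)) (x : F) :
    ‖negaSummand n k f c x‖ = 1 := by
  rw [negaSummand, norm_mul, norm_negaPhase, AddChar.norm_apply, one_mul]

def negaDerivative (n k : ℕ) (f : F → ZMod (2 ^ k)) (z y : F) : ZMod (2 ^ k) :=
  f (y + z) - f y + 2 ^ (k - 1) * iotaZ k (Tr n (z * y))

variable [Fintype F] [CharP F 2]

def trChar (hF : Fintype.card F = 2 ^ n) : AddChar F ℂ where
  toFun x := (-1) ^ iotaN (Tr n x)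
  map_zero_eq_one' := by simp [Tr_zero, iotaN]
  map_add_eq_mul' x y := by
    rw [Tr_add, neg_one_pow_iotaN_add (Tr_eq_zero_or_one hF x) (Tr_eq_zero_or_one hF y)]

theorem trChar_isPrimitive (hF : Fintype.card F = 2 ^ n) : (trChar hF).IsPrimitive := by
  intro a ha htriv
  obtain ⟨t, ht⟩ := exists_Tr_eq_one hF
  have := DFunLike.congr_fun htriv (a⁻¹ * t)
  norm_num [trChar, AddChar.mulShift_apply, ha, ht, iotaN] at this

theorem negaPhase_add_mul_conj (hF : Fintype.card F = 2 ^ n) {c₀ : F} (hc₀ : c₀ = 0 ∨ c₀ = 1)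
    (x z : F) :
    negaPhase n c₀ (x + z) * conj (negaPhase n c₀ x) =
      negaPhase n c₀ z * (-1) ^ iotaN (Tr n (c₀ * (z * x))) := by
  have hidem : c₀ * c₀ = c₀ := by rcases hc₀ with rfl | rfl <;> simp
  rw [negaPhase, negaPhase, negaPhase, sig_add, hidem, mul_add c₀ x z, Tr_add, mul_comm x z]
  exact nega_sign_identity (sig_eq_zero_or_one hF _ _) (sig_eq_zero_or_one hF _ _)
    (Tr_eq_zero_or_one hF _) (Tr_eq_zero_or_one hF _) (Tr_eq_zero_or_one hF _)

theorem neg_one_pow_iotaN_Tr_czero_mul (hF : Fintype.card F = 2 ^ n) {k : ℕ} (hk : 1 ≤ k)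
    (c : ZMod (2 ^ k)) (w : F) :
    (-1 : ℂ) ^ iotaN (Tr n (czero k c * w)) =
      ZMod.stdAddChar (c * (2 ^ (k - 1) * iotaZ k (Tr n w))) := by
  rw [← mul_assoc, czero]
  rcases Tr_eq_zero_or_one hF w with h | h
  · split_ifs <;> simp [h, Tr_zero, iotaN, iotaZ]
  · rw [h, iotaZ, if_pos rfl, mul_one, stdAddChar_mul_two_pow_pred hk]
    split_ifs with hc
    · rw [one_mul, h, iotaN, if_pos rfl, pow_one, Odd.neg_one_pow (Nat.odd_iff.mpr hc)]
    · rw [zero_mul, Tr_zero, iotaN, if_neg zero_ne_one, pow_zero,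
        Even.neg_one_pow (Nat.even_iff.mpr (by omega))]

theorem negaK_eq_charTransform (hF : Fintype.card F = 2 ^ n) (k : ℕ) (f : F → ZMod (2 ^ k))
    (c : ZMod (2 ^ k)) (u : F) :
    negaK n k f c u = charTransform (trChar hF) (negaSummand n k f c) u := by
  refine sum_congr rfl fun x _ => ?_
  rw [pow_add, zeta_pow_val]
  simp only [trChar, AddChar.coe_mk, negaSummand, negaPhase]
  ring

theorem autocorrelation_negaSummand (hF : Fintype.card F = 2 ^ n) {k : ℕ} (hk : 1 ≤ k)
    (f : F → ZMod (2 ^ k)) (c : ZMod (2 ^ k)) (z : F) :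
    autocorrelation (negaSummand n k f c) z =
      negaPhase n (czero k c) z * ∑ x, ZMod.stdAddChar (c * negaDerivative n k f z x) := by
  rw [autocorrelation, mul_sum]
  refine sum_congr rfl fun x _ => ?_
  rw [negaSummand, negaSummand, negaDerivative, map_mul (starRingEnd ℂ),
    ← AddChar.map_neg_eq_conj, mul_mul_mul_comm,
    negaPhase_add_mul_conj hF (czero_eq_zero_or_one k c), neg_one_pow_iotaN_Tr_czero_mul hF hk,
    mul_assoc, ← AddChar.map_add_eq_mul, ← AddChar.map_add_eq_mul]
  ring_nf

end Nega

theorem stmt6_general {F : Type} [Field F] [Fintype F] [DecidableEq F] (n k : ℕ)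
    (hk : 1 ≤ k) (hF : Fintype.card F = 2 ^ n)
    (f : F → ZMod (2 ^ k)) :
    (∀ u : F, ∀ c : ZMod (2 ^ k), c ≠ 0 →
        ‖negaK n k f c u‖ = Real.sqrt (2 ^ n)) ↔
      (∀ z : F, z ≠ 0 →
        IsBalancedFn n k (fun y => f (y + z) - f y +
          2 ^ (k - 1) * iotaZ k (Tr n (z * y)))) := by
  have := charP_of_card_eq_prime_pow hF
  have hnorm : ∀ c u, ‖negaK n k f c u‖ = √(2 ^ n) ↔
      ‖charTransform (trChar hF) (negaSummand n k f c) u‖ ^ 2 = Fintype.card F := by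
    intro c u
    rw [negaK_eq_charTransform hF, eq_comm,
      Real.sqrt_eq_iff_eq_sq (by positivity) (norm_nonneg _), hF, eq_comm]
    push_cast
    rfl
  have hbal : ∀ z, IsBalancedFn n k (negaDerivative n k f z) ↔
      ∀ c ≠ 0, ∑ x, ZMod.stdAddChar (c * negaDerivative n k f z x) = 0 := by
    intro z
    rw [sum_stdAddChar_mul_eq_zero_iff, hF]
    rfl
  change _ ↔ ∀ z : F, z ≠ 0 → IsBalancedFn n k (negaDerivative n k f z)
  simp_rw [hbal, forall_comm (α := F), hnorm,
    forall_norm_charTransform_sq_iff (trChar_isPrimitive hF) (norm_negaSummand k f _),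
    autocorrelation_negaSummand hF hk, mul_eq_zero, negaPhase_ne_zero, false_or]
  exact forall₂_comm

/-- f is nega-ℤ_{2^k}-bent iff for every nonzero z the function
y ↦ f(y+z) − f(y) + 2^{k−1}·ι(Tr(zy)) is balanced. -/
theorem stmt6 {F : Type} [Field F] [Fintype F] [DecidableEq F] (n k : ℕ)
    (hn : 1 ≤ n) (hk : 1 ≤ k) (hF : Fintype.card F = 2 ^ n)
    (f : F → ZMod (2 ^ k)) :
    (∀ u : F, ∀ c : ZMod (2 ^ k), c ≠ 0 →
        ‖negaK n k f c u‖ = Real.sqrt (2 ^ n)) ↔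
      (∀ z : F, z ≠ 0 →
        IsBalancedFn n k (fun y => f (y + z) - f y +
          2 ^ (k - 1) * iotaZ k (Tr n (z * y)))) :=
  stmt6_general n k hk hF f
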